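/- Glivenko's theorem (intuitionistic version): if A and all formulas in Γ contain no occurrence of the universal quantifier ∀, then Γ ⊢_NK A if and only if Γ ⊢_NJ ¬¬A, and also if and only if Γ, ¬A ⊢_NJ ⊥. -/

import Mathlib

/-- First-order terms: variables (de Bruijn style indices for bound variables
are merged with free variable indices) and function symbols with arguments. -/
inductive Term where
  | var : ℕ → Term
  | fn : ℕ → (ℕ → Term) → Term

/-- Lift (shift by one) all variables ≥ k. -/
def Term.lift (k : ℕ) : Term → Term
  | .var n => .var (if n < k then n else n + 1)
  | .fn f a => .fn f (fun i => (a i).lift k)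

/-- Capture-avoiding substitution of the term `s` for variable `k` (de Bruijn). -/
def Term.subst (k : ℕ) (s : Term) : Term → Term
  | .var n => if n < k then .var n else if n = k then s else .var (n - 1)
  | .fn f a => .fn f (fun i => Term.subst k s (a i))

/-- Free variables of a term. -/
def Term.fv : Term → Set ℕ
  | .var n => {n}
  | .fn _ a => ⋃ i, (a i).fv

/-- First-order formulas with primitive negation, de Bruijn binders. -/
inductive Formula where
  | pred : ℕ → (ℕ → Term) → Formula
  | bot : Formula
  | top : Formula
  | neg : Formula → Formula
  | conj : Formula → Formula → Formula
  | disj : Formula → Formula → Formula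
  | impl : Formula → Formula → Formula
  | all : Formula → Formula
  | ex : Formula → Formula

def Formula.lift (k : ℕ) : Formula → Formula
  | .pred r a => .pred r (fun i => (a i).lift k)
  | .bot => .bot
  | .top => .top
  | .neg A => .neg (A.lift k)
  | .conj A B => .conj (A.lift k) (B.lift k)
  | .disj A B => .disj (A.lift k) (B.lift k)
  | .impl A B => .impl (A.lift k) (B.lift k)
  | .all A => .all (A.lift (k + 1))
  | .ex A => .ex (A.lift (k + 1))

/-- Capture-avoiding substitution of term `s` for variable `k` in a formula. -/
def Formula.subst (k : ℕ) (s : Term) : Formula → Formula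
  | .pred r a => .pred r (fun i => Term.subst k s (a i))
  | .bot => .bot
  | .top => .top
  | .neg A => .neg (A.subst k s)
  | .conj A B => .conj (A.subst k s) (B.subst k s)
  | .disj A B => .disj (A.subst k s) (B.subst k s)
  | .impl A B => .impl (A.subst k s) (B.subst k s)
  | .all A => .all (A.subst (k + 1) (s.lift 0))
  | .ex A => .ex (A.subst (k + 1) (s.lift 0))

/-- Free variables of a formula. -/
def Formula.fv : Formula → Set ℕ
  | .pred _ a => ⋃ i, (a i).fv
  | .bot => ∅
  | .top => ∅
  | .neg A => A.fv
  | .conj A B => A.fv ∪ B.fv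
  | .disj A B => A.fv ∪ B.fv
  | .impl A B => A.fv ∪ B.fv
  | .all A => {n | n + 1 ∈ A.fv}
  | .ex A => {n | n + 1 ∈ A.fv}

/-- Object-level biconditional, as a defined connective. -/
def Formula.fIff (A B : Formula) : Formula := .conj (.impl A B) (.impl B A)

/-- `A` contains no occurrence of the universal quantifier ∀. -/
def Formula.forallFree : Formula → Prop
  | .pred _ _ => True
  | .bot => True
  | .top => True
  | .neg A => A.forallFree
  | .conj A B => A.forallFree ∧ B.forallFree
  | .disj A B => A.forallFree ∧ B.forallFree
  | .impl A B => A.forallFree ∧ B.forallFree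
  | .all _ => False
  | .ex A => A.forallFree

/-- `A` contains no occurrence of implication →. -/
def Formula.impFree : Formula → Prop
  | .pred _ _ => True
  | .bot => True
  | .top => True
  | .neg A => A.impFree
  | .conj A B => A.impFree ∧ B.impFree
  | .disj A B => A.impFree ∧ B.impFree
  | .impl _ _ => False
  | .all A => A.impFree
  | .ex A => A.impFree

/-- The minimal translation (·)^m. -/
def Formula.mtr : Formula → Formula
  | .pred r a => .pred r a
  | .bot => .bot
  | .top => .top
  | .neg A => .neg A.mtr
  | .conj A B => .conj A.mtr B.mtr
  | .disj A B => .disj A.mtr B.mtr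
  | .impl A B => .disj (.neg A.mtr) B.mtr
  | .all A => .neg (.ex (.neg A.mtr))
  | .ex A => .ex A.mtr

/-- The intuitionistic translation (·)^j. -/
def Formula.jtr : Formula → Formula
  | .pred r a => .pred r a
  | .bot => .bot
  | .top => .top
  | .neg A => .neg A.jtr
  | .conj A B => .conj A.jtr B.jtr
  | .disj A B => .disj A.jtr B.jtr
  | .impl A B => .impl A.jtr B.jtr
  | .all A => .neg (.ex (.neg A.jtr))
  | .ex A => .ex A.jtr

/-- Negative formulas: built from negated atoms, ⊥, ⊤ using only ¬, ∧, →, ∀. -/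
inductive Formula.Negative : Formula → Prop where
  | negAtom : ∀ r a, Formula.Negative (.neg (.pred r a))
  | bot : Formula.Negative .bot
  | top : Formula.Negative .top
  | neg : ∀ {A}, Formula.Negative A → Formula.Negative (.neg A)
  | conj : ∀ {A B}, Formula.Negative A → Formula.Negative B → Formula.Negative (.conj A B)
  | impl : ∀ {A B}, Formula.Negative A → Formula.Negative B → Formula.Negative (.impl A B)
  | all : ∀ {A}, Formula.Negative A → Formula.Negative (.all A)

/-- Natural deduction derivability; the flags `efq`, `raa` tell whether the
ex falso quodlibet and reductio ad absurdum rules are available.  `Deriv efq raa Γ A`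
means `A` is derivable with undischarged assumptions among `Γ`. -/
inductive Deriv (efq raa : Bool) : Set Formula → Formula → Prop where
  | hyp : ∀ {Γ A}, A ∈ Γ → Deriv efq raa Γ A
  | topI : ∀ {Γ}, Deriv efq raa Γ .top
  | negI : ∀ {Γ A}, Deriv efq raa (insert A Γ) .bot → Deriv efq raa Γ (.neg A)
  | negE : ∀ {Γ A}, Deriv efq raa Γ (.neg A) → Deriv efq raa Γ A → Deriv efq raa Γ .bot
  | conjI : ∀ {Γ A B}, Deriv efq raa Γ A → Deriv efq raa Γ B → Deriv efq raa Γ (.conj A B)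
  | conjE1 : ∀ {Γ A B}, Deriv efq raa Γ (.conj A B) → Deriv efq raa Γ A
  | conjE2 : ∀ {Γ A B}, Deriv efq raa Γ (.conj A B) → Deriv efq raa Γ B
  | disjI1 : ∀ {Γ A B}, Deriv efq raa Γ A → Deriv efq raa Γ (.disj A B)
  | disjI2 : ∀ {Γ A B}, Deriv efq raa Γ B → Deriv efq raa Γ (.disj A B)
  | disjE : ∀ {Γ A B C}, Deriv efq raa Γ (.disj A B) → Deriv efq raa (insert A Γ) C →
      Deriv efq raa (insert B Γ) C → Deriv efq raa Γ C
  | implI : ∀ {Γ A B}, Deriv efq raa (insert A Γ) B → Deriv efq raa Γ (.impl A B)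
  | implE : ∀ {Γ A B}, Deriv efq raa Γ (.impl A B) → Deriv efq raa Γ A → Deriv efq raa Γ B
  | allI : ∀ {Γ A}, Deriv efq raa (Formula.lift 0 '' Γ) A → Deriv efq raa Γ (.all A)
  | allE : ∀ {Γ A} (t : Term), Deriv efq raa Γ (.all A) → Deriv efq raa Γ (A.subst 0 t)
  | exI : ∀ {Γ A} (t : Term), Deriv efq raa Γ (A.subst 0 t) → Deriv efq raa Γ (.ex A)
  | exE : ∀ {Γ A C}, Deriv efq raa Γ (.ex A) →
      Deriv efq raa (insert A (Formula.lift 0 '' Γ)) (C.lift 0) → Deriv efq raa Γ C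
  | efqR : ∀ {Γ A}, efq = true → Deriv efq raa Γ .bot → Deriv efq raa Γ A
  | raaR : ∀ {Γ A}, raa = true → Deriv efq raa (insert (.neg A) Γ) .bot → Deriv efq raa Γ A

/-- Minimal natural deduction. -/
def NM : Set Formula → Formula → Prop := Deriv false false
/-- Intuitionistic natural deduction. -/
def NJ : Set Formula → Formula → Prop := Deriv true false
/-- Classical natural deduction (minimal + reductio ad absurdum). -/
def NK : Set Formula → Formula → Prop := Deriv false true

/-!
Replacing `∀x A` by `¬∃x¬A` (the translation `jtr`, the identity on `∀`-free formulas), every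
NK-derivation of `A` from `Γ` becomes an NJ-derivation of `¬¬Aʲ` from `Γʲ`. Double negation is a
monad in minimal logic, so the intuitionistic rules lift to `¬¬`-derivations; reductio ad
absurdum lifts because `¬¬A` is exactly what it concludes from `¬A ⊢ ⊥`; only `→`-introduction
needs ex falso, and `∀`-introduction lifts because its translation `¬∃x¬A` is negative.
-/

namespace Deriv

variable {e r : Bool} {Γ Δ : Set Formula} {A B C : Formula}

lemma weaken (h : Deriv e r Γ A) (hs : Γ ⊆ Δ) : Deriv e r Δ A := by
  induction h generalizing Δ with
  | hyp h => exact .hyp (hs h)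
  | topI => exact .topI
  | negI _ ih => exact .negI (ih (Set.insert_subset_insert hs))
  | negE _ _ ih1 ih2 => exact .negE (ih1 hs) (ih2 hs)
  | conjI _ _ ih1 ih2 => exact .conjI (ih1 hs) (ih2 hs)
  | conjE1 _ ih => exact .conjE1 (ih hs)
  | conjE2 _ ih => exact .conjE2 (ih hs)
  | disjI1 _ ih => exact .disjI1 (ih hs)
  | disjI2 _ ih => exact .disjI2 (ih hs)
  | disjE _ _ _ ih1 ih2 ih3 =>
      exact .disjE (ih1 hs) (ih2 (Set.insert_subset_insert hs))
        (ih3 (Set.insert_subset_insert hs))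
  | implI _ ih => exact .implI (ih (Set.insert_subset_insert hs))
  | implE _ _ ih1 ih2 => exact .implE (ih1 hs) (ih2 hs)
  | allI _ ih => exact .allI (ih (Set.image_mono hs))
  | allE t _ ih => exact .allE t (ih hs)
  | exI t _ ih => exact .exI t (ih hs)
  | exE _ _ ih1 ih2 =>
      exact .exE (ih1 hs) (ih2 (Set.insert_subset_insert (Set.image_mono hs)))
  | efqR he _ ih => exact .efqR he (ih hs)
  | raaR hr _ ih => exact .raaR hr (ih (Set.insert_subset_insert hs))

lemma weaken_insert (h : Deriv e r Γ A) : Deriv e r (insert B Γ) A :=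
  h.weaken (Set.subset_insert _ _)

lemma weaken_insert_insert (h : Deriv e r (insert A Γ) C) :
    Deriv e r (insert A (insert B Γ)) C :=
  h.weaken (Set.insert_subset_insert (Set.subset_insert _ _))

lemma insert_self : Deriv e r (insert A Γ) A :=
  .hyp (Set.mem_insert _ _)

lemma insert_insert_self : Deriv e r (insert B (insert A Γ)) A :=
  insert_self.weaken_insert

lemma negneg_iff : Deriv e r Γ (.neg (.neg A)) ↔ Deriv e r (insert (.neg A) Γ) .bot :=
  ⟨fun h => .negE h.weaken_insert insert_self, .negI⟩

lemma negneg_intro (h : Deriv e r Γ A) : Deriv e r Γ (.neg (.neg A)) :=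
  .negI (.negE insert_self h.weaken_insert)

lemma bot_of_negneg (h : Deriv e r Γ (.neg (.neg .bot))) : Deriv e r Γ .bot :=
  .negE h (.negI insert_self)

lemma neg_of_negneg_neg (h : Deriv e r Γ (.neg (.neg (.neg A)))) : Deriv e r Γ (.neg A) :=
  .negI (.negE h.weaken_insert (negneg_intro insert_self))

lemma negneg_bind (hA : Deriv e r Γ (.neg (.neg A)))
    (hB : Deriv e r (insert A Γ) (.neg (.neg B))) : Deriv e r Γ (.neg (.neg B)) :=
  .negI (.negE hA.weaken_insert (.negI (.negE hB.weaken_insert_insert insert_insert_self)))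

lemma negneg_map (hA : Deriv e r Γ (.neg (.neg A))) (hB : Deriv e r (insert A Γ) B) :
    Deriv e r Γ (.neg (.neg B)) :=
  negneg_bind hA (negneg_intro hB)

lemma negneg_map₂ (hA : Deriv e r Γ (.neg (.neg A))) (hB : Deriv e r Γ (.neg (.neg B)))
    (hC : Deriv e r (insert B (insert A Γ)) C) : Deriv e r Γ (.neg (.neg C)) :=
  negneg_bind hA (negneg_map hB.weaken_insert hC)

lemma negneg_implI (h : Deriv true r (insert A Γ) (.neg (.neg B))) :
    Deriv true r Γ (.neg (.neg (.impl A B))) := by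
  refine .negI ?_
  have hnA : Deriv true r (insert (.neg (.impl A B)) Γ) (.neg A) :=
    .negI (.negE h.weaken_insert_insert
      (.negI (.negE insert_insert_self.weaken_insert (.implI insert_insert_self))))
  exact .negE insert_self (.implI (.efqR rfl (.negE hnA.weaken_insert insert_self)))

/-- Every derivation, with or without ex falso, is a classical one: ex falso is an instance of
reductio ad absurdum with a vacuous discharge. -/
lemma toClassical {e' : Bool} (h : Deriv e r Γ A) : Deriv e' true Γ A := by
  induction h with
  | hyp h => exact .hyp h
  | topI => exact .topI
  | negI _ ih => exact .negI ih
  | negE _ _ ih1 ih2 => exact .negE ih1 ih2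
  | conjI _ _ ih1 ih2 => exact .conjI ih1 ih2
  | conjE1 _ ih => exact .conjE1 ih
  | conjE2 _ ih => exact .conjE2 ih
  | disjI1 _ ih => exact .disjI1 ih
  | disjI2 _ ih => exact .disjI2 ih
  | disjE _ _ _ ih1 ih2 ih3 => exact .disjE ih1 ih2 ih3
  | implI _ ih => exact .implI ih
  | implE _ _ ih1 ih2 => exact .implE ih1 ih2
  | allI _ ih => exact .allI ih
  | allE t _ ih => exact .allE t ih
  | exI t _ ih => exact .exI t ih
  | exE _ _ ih1 ih2 => exact .exE ih1 ih2
  | efqR _ _ ih => exact .raaR rfl ih.weaken_insert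
  | raaR _ _ ih => exact .raaR rfl ih

end Deriv

namespace Formula

lemma jtr_lift (k : ℕ) (A : Formula) : (A.lift k).jtr = A.jtr.lift k := by
  induction A generalizing k <;> simp [lift, jtr, *]

lemma jtr_subst (k : ℕ) (s : Term) (A : Formula) : (A.subst k s).jtr = A.jtr.subst k s := by
  induction A generalizing k s <;> simp [subst, jtr, *]

lemma image_jtr_image_lift (k : ℕ) (Γ : Set Formula) :
    jtr '' (lift k '' Γ) = lift k '' (jtr '' Γ) := by
  simp only [Set.image_image, jtr_lift]

lemma jtr_eq_self_of_forallFree {A : Formula} (h : A.forallFree) : A.jtr = A := by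
  induction A with
  | all => exact h.elim
  | neg _ ih | ex _ ih => simp [jtr, ih h]
  | conj _ _ ih1 ih2 | disj _ _ ih1 ih2 | impl _ _ ih1 ih2 => simp [jtr, ih1 h.1, ih2 h.2]
  | _ => rfl

end Formula

open Formula Deriv in
lemma nj_negneg_jtr_of_nk {Γ : Set Formula} {A : Formula} (h : Deriv false true Γ A) :
    NJ (jtr '' Γ) (.neg (.neg A.jtr)) := by
  induction h with
  | hyp h => exact negneg_intro (.hyp (Set.mem_image_of_mem _ h))
  | topI => exact negneg_intro .topI
  | negI _ ih =>
      rw [Set.image_insert_eq] at ih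
      exact negneg_intro (.negI (bot_of_negneg ih))
  | negE _ _ ih1 ih2 => exact negneg_intro (.negE ih1 ih2)
  | conjI _ _ ih1 ih2 => exact negneg_map₂ ih1 ih2 (.conjI insert_insert_self insert_self)
  | conjE1 _ ih => exact negneg_map ih (.conjE1 insert_self)
  | conjE2 _ ih => exact negneg_map ih (.conjE2 insert_self)
  | disjI1 _ ih => exact negneg_map ih (.disjI1 insert_self)
  | disjI2 _ ih => exact negneg_map ih (.disjI2 insert_self)
  | disjE _ _ _ ih1 ih2 ih3 =>
      rw [Set.image_insert_eq] at ih2 ih3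
      exact negneg_bind ih1
        (.disjE insert_self ih2.weaken_insert_insert ih3.weaken_insert_insert)
  | implI _ ih =>
      rw [Set.image_insert_eq] at ih
      exact negneg_implI ih
  | implE _ _ ih1 ih2 => exact negneg_map₂ ih1 ih2 (.implE insert_insert_self insert_self)
  | allI _ ih =>
      rw [image_jtr_image_lift] at ih
      refine negneg_intro (.negI (.exE insert_self (.negE (ih.weaken ?_) insert_self)))
      exact (Set.image_mono (Set.subset_insert _ _)).trans (Set.subset_insert _ _)
  | allE t _ ih =>
      rw [jtr_subst]
      exact .negI (.negE (neg_of_negneg_neg ih).weaken_insert (.exI t insert_self))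
  | exI t _ ih =>
      rw [jtr_subst] at ih
      exact negneg_map ih (.exI t insert_self)
  | exE _ _ ih1 ih2 =>
      rw [Set.image_insert_eq, image_jtr_image_lift, jtr_lift] at ih2
      refine negneg_bind ih1 (.exE insert_self (ih2.weaken ?_))
      exact Set.insert_subset_insert (Set.image_mono (Set.subset_insert _ _))
  | efqR he => exact absurd he Bool.false_ne_true
  | raaR _ _ ih =>
      rw [Set.image_insert_eq] at ih
      exact .negI (bot_of_negneg ih)

/-- Glivenko's theorem, intuitionistic version. -/
theorem glivenko_intuitionistic (Γ : Set Formula) (A : Formula)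
    (hA : A.forallFree) (hΓ : ∀ B ∈ Γ, B.forallFree) :
    (NK Γ A ↔ NJ Γ (.neg (.neg A))) ∧
    (NK Γ A ↔ NJ (insert (.neg A) Γ) .bot) := by
  have hΓ_jtr : Formula.jtr '' Γ = Γ := by
    rw [Set.image_congr fun B hB => Formula.jtr_eq_self_of_forallFree (hΓ B hB), Set.image_id']
  have nk_iff : NK Γ A ↔ NJ Γ (.neg (.neg A)) := by
    refine ⟨fun h => ?_, fun h => .raaR rfl (Deriv.negneg_iff.mp h).toClassical⟩
    simpa only [hΓ_jtr, Formula.jtr_eq_self_of_forallFree hA] using nj_negneg_jtr_of_nk h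
  exact ⟨nk_iff, nk_iff.trans Deriv.negneg_iff⟩
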